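/- Let k have characteristic different from 2, let n = 2m + 1 with m ≥ 1, let α ∈ L be such that the symmetric bilinear form w(x, y) := θ*_{n−1}(α·x·y) on L is nondegenerate, and let M ⊆ L be an m-dimensional k-subspace with θ*_{n−1}(α·u·v) = 0 and θ*_{n−1}(α·θ·u·v) = 0 for all u, v ∈ M. If ℓ ∈ M satisfies ℓ ≠ 0 and ℓ·θ^i ∈ M for all 0 ≤ i ≤ m − 1, then: ℓ is a unit of L; the elements ℓ, ℓ·θ, …, ℓ·θ^{m−1} form a k-basis of M; and there exists a nonzero a ∈ k with α·ℓ² = a. -/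

import Mathlib

/-!
Writing `s < 2m` as `2j` or `2j + 1` and taking `u = v = ℓ θ^j` in the two isotropy conditions
gives `θ*_{n-1}(α ℓ² θ^s) = 0` for all `s < n - 1`. Since `θ*_{n-1}(θ^i)` is `0` for `i < n - 1`
and `1` for `i = n - 1`, pairing against `θ^s` is triangular with respect to the power basis, so
this kills every coordinate of `α ℓ²` except the constant one: `α ℓ² = a ∈ k`. If `a = 0` then
`ℓ²` is in the kernel of the nondegenerate form, so `ℓ² = 0`, and `ℓ = 0` because `L` is reduced
(`f` is separable). Hence `a ≠ 0`, `ℓ` is a unit, the `ℓ θ^i` (`i < m`) are independent, and they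
span `M` by counting dimensions.
-/

open Polynomial

theorem AdjoinRoot.isReduced_of_squarefree {K : Type*} [Field K] {f : K[X]} (hf : Squarefree f) :
    IsReduced (AdjoinRoot f) :=
  (RingHom.ker_isRadical_iff_reduced_of_surjective
    (Ideal.Quotient.mk_surjective (I := Ideal.span {f}))).mp <| by
    rw [Ideal.mk_ker]
    exact isRadical_iff_span_singleton.mp hf.isRadical

namespace PowerBasis

variable {R S : Type*} [CommRing R] [CommRing S] [Algebra R S] (pb : PowerBasis R S)
  (φ : S →ₗ[R] R)

theorem apply_mul_gen_pow (β : S) (s : ℕ) :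
    φ (β * pb.gen ^ s) = ∑ i : Fin pb.dim, pb.basis.repr β i * φ (pb.gen ^ ((i : ℕ) + s)) := by
  conv_lhs => rw [← pb.basis.sum_repr β]
  simp only [Finset.sum_mul, map_sum, smul_mul_assoc, map_smul, smul_eq_mul, pb.basis_eq_pow,
    pow_add]

variable {φ}

theorem repr_eq_zero_of_forall_apply_mul_gen_pow_eq_zero
    (hφ1 : φ (pb.gen ^ (pb.dim - 1)) = 1) (hφ0 : ∀ i < pb.dim - 1, φ (pb.gen ^ i) = 0)
    {β : S} (hβ : ∀ s, s + 1 < pb.dim → φ (β * pb.gen ^ s) = 0) (i : Fin pb.dim)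
    (hi : 0 < (i : ℕ)) : pb.basis.repr β i = 0 := by
  induction i using WellFoundedGT.induction with
  | _ i ih =>
  have h := hβ (pb.dim - 1 - i) (by omega)
  rw [apply_mul_gen_pow, Finset.sum_eq_single i, Nat.add_sub_of_le (by omega), hφ1,
    mul_one] at h
  · exact h
  · intro j _ hji
    rcases lt_or_gt_of_ne hji with hlt | hgt
    · rw [hφ0 _ (by omega), mul_zero]
    · rw [ih j hgt (by omega), zero_mul]
  · simp

theorem exists_algebraMap_eq_of_forall_apply_mul_gen_pow_eq_zero [Nontrivial S]
    (hφ1 : φ (pb.gen ^ (pb.dim - 1)) = 1) (hφ0 : ∀ i < pb.dim - 1, φ (pb.gen ^ i) = 0)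
    {β : S} (hβ : ∀ s, s + 1 < pb.dim → φ (β * pb.gen ^ s) = 0) :
    ∃ a : R, β = algebraMap R S a := by
  refine ⟨pb.basis.repr β ⟨0, pb.dim_pos⟩, ?_⟩
  conv_lhs => rw [← pb.basis.sum_repr β]
  rw [Fintype.sum_eq_single ⟨0, pb.dim_pos⟩, pb.basis_eq_pow, pow_zero,
    Algebra.algebraMap_eq_smul_one]
  intro i hi
  rw [pb.repr_eq_zero_of_forall_apply_mul_gen_pow_eq_zero hφ1 hφ0 hβ i
    (Nat.pos_of_ne_zero fun h => hi (Fin.ext h)), zero_smul]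

theorem linearIndependent_mul_gen_pow {ℓ : S} (hℓ : IsUnit ℓ) {m : ℕ} (hm : m ≤ pb.dim) :
    LinearIndependent R fun i : Fin m => ℓ * pb.gen ^ (i : ℕ) := by
  have hpow : LinearIndependent R fun i : Fin m => pb.gen ^ (i : ℕ) := by
    simpa [Function.comp_def, pb.basis_eq_pow] using
      pb.basis.linearIndependent.comp _ (Fin.castLE_injective hm)
  exact hpow.map' (LinearMap.mulLeft R ℓ) (LinearMap.ker_eq_bot.mpr hℓ.mul_right_injective)

end PowerBasis

theorem apply_mul_sq_mul_pow_eq_zero {R S : Type*} [Zero R] [CommSemiring S] (φ : S → R)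
    {α θ ℓ : S} {M : Set S} (hiso : ∀ u ∈ M, ∀ v ∈ M, φ (α * u * v) = 0)
    (hiso' : ∀ u ∈ M, ∀ v ∈ M, φ (α * θ * u * v) = 0) {m : ℕ} (hℓ : ∀ i < m, ℓ * θ ^ i ∈ M)
    {s : ℕ} (hs : s < 2 * m) : φ (α * ℓ ^ 2 * θ ^ s) = 0 := by
  obtain ⟨j, rfl | rfl⟩ := Nat.even_or_odd' s
  all_goals have hj := hℓ j (by omega)
  · convert hiso _ hj _ hj using 2
    ring
  · convert hiso' _ hj _ hj using 2
    ring

theorem stmt_14_general (k : Type*) [Field k]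
    (f : Polynomial k) (hf : f.Monic) (hsep : f.Separable)
    (m : ℕ) (hdeg : f.natDegree = 2 * m + 1)
    (coeffTop : AdjoinRoot f →ₗ[k] k)
    (hct1 : coeffTop (AdjoinRoot.root f ^ (f.natDegree - 1)) = 1)
    (hct0 : ∀ i : ℕ, i < f.natDegree - 1 → coeffTop (AdjoinRoot.root f ^ i) = 0)
    (α : AdjoinRoot f)
    (hnd : ∀ x : AdjoinRoot f, (∀ y : AdjoinRoot f, coeffTop (α * x * y) = 0) → x = 0)
    (M : Submodule k (AdjoinRoot f)) (hMdim : Module.finrank k M = m)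
    (hiso : ∀ u ∈ M, ∀ v ∈ M, coeffTop (α * u * v) = 0)
    (hiso' : ∀ u ∈ M, ∀ v ∈ M, coeffTop (α * AdjoinRoot.root f * u * v) = 0)
    (ℓ : AdjoinRoot f) (hℓ0 : ℓ ≠ 0)
    (hℓpow : ∀ i : ℕ, i ≤ m - 1 → ℓ * AdjoinRoot.root f ^ i ∈ M) :
    IsUnit ℓ ∧
    (LinearIndependent k (fun i : Fin m => ℓ * AdjoinRoot.root f ^ (i : ℕ)) ∧
      Submodule.span k (Set.range fun i : Fin m => ℓ * AdjoinRoot.root f ^ (i : ℕ)) = M) ∧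
    ∃ a : k, a ≠ 0 ∧ α * ℓ ^ 2 = algebraMap k (AdjoinRoot f) a := by
  let pb := AdjoinRoot.powerBasis hf.ne_zero
  have : Nontrivial (AdjoinRoot f) := nontrivial_of_ne ℓ 0 hℓ0
  have : Module.Finite k (AdjoinRoot f) := pb.finite
  have : IsReduced (AdjoinRoot f) := AdjoinRoot.isReduced_of_squarefree hsep.squarefree
  have hℓM : ∀ i < m, ℓ * AdjoinRoot.root f ^ i ∈ M := fun i hi => hℓpow i (by omega)
  obtain ⟨a, ha⟩ := pb.exists_algebraMap_eq_of_forall_apply_mul_gen_pow_eq_zero hct1 hct0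
    fun s hs => apply_mul_sq_mul_pow_eq_zero coeffTop hiso hiso' hℓM (by simp [pb] at hs; omega)
  have ha0 : a ≠ 0 := by
    rintro rfl
    have hℓsq : ℓ ^ 2 = 0 := hnd _ fun y => by rw [ha, map_zero, zero_mul, map_zero]
    exact hℓ0 (IsNilpotent.eq_zero ⟨2, hℓsq⟩)
  have hℓ : IsUnit ℓ := by
    have : IsUnit (α * ℓ ^ 2) := ha ▸ (isUnit_iff_ne_zero.mpr ha0).map _
    exact (isUnit_pow_iff two_ne_zero).mp (isUnit_of_mul_isUnit_right this)
  have hind : LinearIndependent k fun i : Fin m => ℓ * AdjoinRoot.root f ^ (i : ℕ) :=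
    pb.linearIndependent_mul_gen_pow hℓ (by simp [pb]; omega)
  refine ⟨hℓ, ⟨hind, ?_⟩, a, ha0, ha⟩
  refine Submodule.eq_of_le_of_finrank_le (Submodule.span_le.mpr ?_) ?_
  · rintro _ ⟨i, rfl⟩
    exact hℓM i i.isLt
  · rw [hMdim, finrank_span_eq_card hind, Fintype.card_fin]

/-- In the setting of Statement 13 (`w(x,y) = θ*_{n-1}(α x y)` nondegenerate,
`M` an `m`-dimensional subspace isotropic for `w` and `θ·w`), if `ℓ ∈ M` is nonzero and
`ℓ θ^i ∈ M` for all `0 ≤ i ≤ m - 1`, then `ℓ` is a unit of `L`, the elements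
`ℓ, ℓθ, …, ℓθ^(m-1)` form a `k`-basis of `M`, and `α ℓ² = a` for some nonzero `a ∈ k`. -/
theorem stmt_14 (k : Type*) [Field k] (hchar : ringChar k ≠ 2)
    (f : Polynomial k) (hf : f.Monic) (hsep : f.Separable)
    (m : ℕ) (hm : 1 ≤ m) (hdeg : f.natDegree = 2 * m + 1)
    (coeffTop : AdjoinRoot f →ₗ[k] k)
    (hct1 : coeffTop (AdjoinRoot.root f ^ (f.natDegree - 1)) = 1)
    (hct0 : ∀ i : ℕ, i < f.natDegree - 1 → coeffTop (AdjoinRoot.root f ^ i) = 0)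
    (α : AdjoinRoot f)
    (hnd : ∀ x : AdjoinRoot f, (∀ y : AdjoinRoot f, coeffTop (α * x * y) = 0) → x = 0)
    (M : Submodule k (AdjoinRoot f)) (hMdim : Module.finrank k M = m)
    (hiso : ∀ u ∈ M, ∀ v ∈ M, coeffTop (α * u * v) = 0)
    (hiso' : ∀ u ∈ M, ∀ v ∈ M, coeffTop (α * AdjoinRoot.root f * u * v) = 0)
    (ℓ : AdjoinRoot f) (hℓM : ℓ ∈ M) (hℓ0 : ℓ ≠ 0)
    (hℓpow : ∀ i : ℕ, i ≤ m - 1 → ℓ * AdjoinRoot.root f ^ i ∈ M) :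
    IsUnit ℓ ∧
    (LinearIndependent k (fun i : Fin m => ℓ * AdjoinRoot.root f ^ (i : ℕ)) ∧
      Submodule.span k (Set.range fun i : Fin m => ℓ * AdjoinRoot.root f ^ (i : ℕ)) = M) ∧
    ∃ a : k, a ≠ 0 ∧ α * ℓ ^ 2 = algebraMap k (AdjoinRoot f) a :=
  stmt_14_general k f hf hsep m hdeg coeffTop hct1 hct0 α hnd M hMdim hiso hiso' ℓ hℓ0 hℓpow
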